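/- arXiv:2005.14383 — 2 statements merged into one kernel-verified Lean document; each statement's English description precedes it below -/
import Mathlib

section
/- Let (Ω,P) be a probability space carrying {0,1}-valued random variables S1, S2, G, E such that P(S1=0)=δ1, P(S2=0)=δ2, P(S1=0, S2=0)=δ12 with δ2 ≤ δ1 < 1; G is independent of S2 with P(G=1)=(1−δ1)/(1−δ2); and E is independent of the triple (G,S1,S2) with P(E=1)=δ_FF. Define the modified states S̃1 = G·S2 on the event {E=1} and S̃1 = S1 on {E=0}, and S̃2 = S2. Then P(S̃1=0) = δ1 (the marginal of receiver 1's state is preserved), and P(S̃1=0, S̃2=0) = δ_FF·δ2 + (1−δ_FF)·δ12 = δ_FF·min(δ1,δ2) + (1−δ_FF)·δ12; equivalently, the probability that not both modified forward states are erased equals 1 − δ_FF·min(δ1,δ2) − (1−δ_FF)·δ12. -/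
/-!
On `{E = 1}` the new state `G·S2` is erased unless `G = S2 = 1`, which by independence has
probability `(1-δ1)/(1-δ2) · (1-δ2) = 1-δ1`; on `{E = 0}` it is `S1` itself. Since `E` is
independent of `(G, S1, S2)`, conditioning on `E` gives `P(S̃1 = 0) = δFF·δ1 + (1-δFF)·δ1`,
and likewise `P(S̃1 = 0, S2 = 0) = δFF·δ2 + (1-δFF)·δ12`, because `G·S2 = 0` whenever `S2 = 0`.
-/

open Finset
open scoped Classical

/-- Probability of an event under a probability mass function on a finite sample space. -/
noncomputable def pr {Ω : Type} [Fintype Ω] (p : Ω → ℝ) (E : Ω → Prop) : ℝ :=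
  ∑ ω, if E ω then p ω else 0

section Pr

variable {Ω : Type} [Fintype Ω] (p : Ω → ℝ)

lemma pr_congr {A B : Ω → Prop} (h : ∀ ω, A ω ↔ B ω) : pr p A = pr p B :=
  congrArg (pr p) (funext fun ω => propext (h ω))

lemma pr_eq_zero_of_forall_not {A : Ω → Prop} (h : ∀ ω, ¬A ω) : pr p A = 0 :=
  Finset.sum_eq_zero fun ω _ => if_neg (h ω)

lemma pr_not (hsum : ∑ ω, p ω = 1) (A : Ω → Prop) :
    pr p (fun ω => ¬A ω) = 1 - pr p A := by
  rw [← hsum, pr, pr, ← Finset.sum_sub_distrib]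
  refine Finset.sum_congr rfl fun ω _ => ?_
  by_cases hA : A ω <;> simp [hA]

lemma pr_eq_false_eq_one_sub (hsum : ∑ ω, p ω = 1) (X : Ω → Bool) :
    pr p (fun ω => X ω = false) = 1 - pr p (fun ω => X ω = true) := by
  rw [← pr_not p hsum]
  exact pr_congr p fun ω => by simp

lemma pr_eq_true_eq_one_sub (hsum : ∑ ω, p ω = 1) (X : Ω → Bool) :
    pr p (fun ω => X ω = true) = 1 - pr p (fun ω => X ω = false) := by
  rw [pr_eq_false_eq_one_sub p hsum]
  ring

lemma pr_and_eq_false_of_indep (hsum : ∑ ω, p ω = 1) (X Y : Ω → Bool)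
    (hindep : pr p (fun ω => X ω = true ∧ Y ω = true)
      = pr p (fun ω => X ω = true) * pr p (fun ω => Y ω = true)) :
    pr p (fun ω => (X ω && Y ω) = false)
      = 1 - pr p (fun ω => X ω = true) * pr p (fun ω => Y ω = true) := by
  rw [← hindep, ← pr_not p hsum]
  exact pr_congr p fun ω => by simp

lemma pr_eq_sum_pr_eq_and {α : Type} [Fintype α] (Y : Ω → α) (A : Ω → Prop) :
    pr p A = ∑ t, pr p (fun ω => Y ω = t ∧ A ω) := by
  unfold pr
  rw [Finset.sum_comm]
  refine Finset.sum_congr rfl fun ω _ => ?_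
  by_cases hA : A ω <;> simp [hA]

lemma pr_eq_pr_true_and_add_pr_false_and (X : Ω → Bool) (A : Ω → Prop) :
    pr p A = pr p (fun ω => X ω = true ∧ A ω) + pr p (fun ω => X ω = false ∧ A ω) := by
  rw [pr_eq_sum_pr_eq_and p X A, Fintype.sum_bool]

lemma pr_and_preimage_eq_mul_of_indep {α : Type} [Fintype α] (A : Ω → Prop) (Y : Ω → α)
    (hindep : ∀ t, pr p (fun ω => A ω ∧ Y ω = t) = pr p A * pr p (fun ω => Y ω = t))
    (Q : α → Prop) :
    pr p (fun ω => A ω ∧ Q (Y ω)) = pr p A * pr p (fun ω => Q (Y ω)) := by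
  rw [pr_eq_sum_pr_eq_and p Y, pr_eq_sum_pr_eq_and p Y (fun ω => Q (Y ω)), Finset.mul_sum]
  refine Finset.sum_congr rfl fun t _ => ?_
  by_cases hQ : Q t
  · rw [pr_congr p (B := fun ω => A ω ∧ Y ω = t) fun ω =>
        ⟨fun ⟨hY, hA, _⟩ => ⟨hA, hY⟩, fun ⟨hA, hY⟩ => ⟨hY, hA, hY ▸ hQ⟩⟩,
      pr_congr p (A := fun ω => Y ω = t ∧ Q (Y ω)) (B := fun ω => Y ω = t) fun ω =>
        ⟨And.left, fun hY => ⟨hY, hY ▸ hQ⟩⟩,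
      hindep]
  · have hnot : ∀ ω, Y ω = t → ¬Q (Y ω) := fun ω hY => hY ▸ hQ
    rw [pr_eq_zero_of_forall_not p (A := fun ω => Y ω = t ∧ A ω ∧ Q (Y ω))
        fun ω ⟨hY, _, hQY⟩ => hnot ω hY hQY,
      pr_eq_zero_of_forall_not p (A := fun ω => Y ω = t ∧ Q (Y ω))
        fun ω ⟨hY, hQY⟩ => hnot ω hY hQY, mul_zero]

lemma pr_ite_eq_add {β : Type} (c : Ω → Bool) (x y : Ω → β) (P : Ω → β → Prop) :
    pr p (fun ω => P ω (if c ω then x ω else y ω))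
      = pr p (fun ω => c ω = true ∧ P ω (x ω)) + pr p (fun ω => c ω = false ∧ P ω (y ω)) := by
  rw [pr_eq_pr_true_and_add_pr_false_and p c]
  congr 1 <;> exact pr_congr p fun ω => by cases c ω <;> simp

lemma pr_ite_eq_of_indep (hsum : ∑ ω, p ω = 1) {β : Type} (c : Ω → Bool) (x y : Ω → β)
    (P : Ω → β → Prop)
    (hx : pr p (fun ω => c ω = true ∧ P ω (x ω))
      = pr p (fun ω => c ω = true) * pr p (fun ω => P ω (x ω)))
    (hy : pr p (fun ω => c ω = false ∧ P ω (y ω))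
      = pr p (fun ω => c ω = false) * pr p (fun ω => P ω (y ω))) :
    pr p (fun ω => P ω (if c ω then x ω else y ω))
      = pr p (fun ω => c ω = true) * pr p (fun ω => P ω (x ω))
        + (1 - pr p (fun ω => c ω = true)) * pr p (fun ω => P ω (y ω)) := by
  rw [pr_ite_eq_add, hx, hy, pr_eq_false_eq_one_sub p hsum]

end Pr

theorem modified_channel_marginals_general {Ω : Type} [Fintype Ω] (p : Ω → ℝ)
    (hsum : ∑ ω, p ω = 1)
    (S1 S2 G E : Ω → Bool) (δ1 δ2 δ12 δFF : ℝ)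
    (hδ21 : δ2 ≤ δ1) (hδ1lt : δ1 < 1)
    (hS1 : pr p (fun ω => S1 ω = false) = δ1)
    (hS2 : pr p (fun ω => S2 ω = false) = δ2)
    (hS12 : pr p (fun ω => S1 ω = false ∧ S2 ω = false) = δ12)
    (hG : pr p (fun ω => G ω = true) = (1 - δ1) / (1 - δ2))
    (hGS2indep : ∀ (g s : Bool),
      pr p (fun ω => G ω = g ∧ S2 ω = s)
        = pr p (fun ω => G ω = g) * pr p (fun ω => S2 ω = s))
    (hE : pr p (fun ω => E ω = true) = δFF)
    (hEindep : ∀ (e g s1 s2 : Bool),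
      pr p (fun ω => E ω = e ∧ G ω = g ∧ S1 ω = s1 ∧ S2 ω = s2)
        = pr p (fun ω => E ω = e) *
          pr p (fun ω => G ω = g ∧ S1 ω = s1 ∧ S2 ω = s2)) :
    let S1t : Ω → Bool := fun ω => if E ω then (G ω && S2 ω) else S1 ω
    (pr p (fun ω => S1t ω = false) = δ1) ∧
    (pr p (fun ω => S1t ω = false ∧ S2 ω = false) = δFF * δ2 + (1 - δFF) * δ12) ∧
    (pr p (fun ω => S1t ω = false ∧ S2 ω = false)
        = δFF * min δ1 δ2 + (1 - δFF) * δ12) ∧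
    (pr p (fun ω => ¬(S1t ω = false ∧ S2 ω = false))
        = 1 - (δFF * min δ1 δ2 + (1 - δFF) * δ12)) := by
  intro S1t
  have hEindepTriple (e : Bool) (Q : Bool × Bool × Bool → Prop) :
      pr p (fun ω => E ω = e ∧ Q (G ω, S1 ω, S2 ω))
        = pr p (fun ω => E ω = e) * pr p (fun ω => Q (G ω, S1 ω, S2 ω)) :=
    pr_and_preimage_eq_mul_of_indep p _ _ (fun ⟨g, s1, s2⟩ => by
      simpa only [Prod.mk.injEq] using hEindep e g s1 s2) Q
  have hGS2 : pr p (fun ω => (G ω && S2 ω) = false) = δ1 := by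
    have hδ2 : 1 - δ2 ≠ 0 := by linarith
    rw [pr_and_eq_false_of_indep p hsum G S2 (hGS2indep true true), hG,
      pr_eq_true_eq_one_sub p hsum, hS2, div_mul_cancel₀ _ hδ2]
    ring
  have hGS2S2 : pr p (fun ω => (G ω && S2 ω) = false ∧ S2 ω = false) = δ2 := by
    rw [← hS2]
    exact pr_congr p fun ω => by cases S2 ω <;> simp
  have hmarginal : pr p (fun ω => S1t ω = false) = δ1 := by
    rw [pr_ite_eq_of_indep p hsum E _ _ (fun _ b => b = false)
      (hEindepTriple true fun t => (t.1 && t.2.2) = false) (hEindepTriple false fun t => t.2.1 = false),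
      hE, hGS2, hS1]
    ring
  have hjoint : pr p (fun ω => S1t ω = false ∧ S2 ω = false) = δFF * δ2 + (1 - δFF) * δ12 := by
    rw [pr_ite_eq_of_indep p hsum E _ _ (fun ω b => b = false ∧ S2 ω = false)
      (hEindepTriple true fun t => (t.1 && t.2.2) = false ∧ t.2.2 = false)
      (hEindepTriple false fun t => t.2.1 = false ∧ t.2.2 = false), hE, hGS2S2, hS12]
  rw [min_eq_right hδ21]
  exact ⟨hmarginal, hjoint, hjoint, by rw [pr_not p hsum, hjoint]⟩

/-- Construction of the modified broadcast channel: when both feedback links to the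
transmitter are erased (event `E = true`, probability `δFF`), receiver 1's forward state
is replaced by `G · S2`. The marginal of receiver 1's state is preserved, and the
probability that both modified forward states are erased is
`δFF·δ2 + (1−δFF)·δ12 = δFF·min(δ1,δ2) + (1−δFF)·δ12`. -/
theorem modified_channel_marginals {Ω : Type} [Fintype Ω] (p : Ω → ℝ)
    (hp : ∀ ω, 0 ≤ p ω) (hsum : ∑ ω, p ω = 1)
    (S1 S2 G E : Ω → Bool) (δ1 δ2 δ12 δFF : ℝ)
    (hδ21 : δ2 ≤ δ1) (hδ1lt : δ1 < 1)
    (hS1 : pr p (fun ω => S1 ω = false) = δ1)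
    (hS2 : pr p (fun ω => S2 ω = false) = δ2)
    (hS12 : pr p (fun ω => S1 ω = false ∧ S2 ω = false) = δ12)
    (hG : pr p (fun ω => G ω = true) = (1 - δ1) / (1 - δ2))
    (hGS2indep : ∀ (g s : Bool),
      pr p (fun ω => G ω = g ∧ S2 ω = s)
        = pr p (fun ω => G ω = g) * pr p (fun ω => S2 ω = s))
    (hE : pr p (fun ω => E ω = true) = δFF)
    (hEindep : ∀ (e g s1 s2 : Bool),
      pr p (fun ω => E ω = e ∧ G ω = g ∧ S1 ω = s1 ∧ S2 ω = s2)
        = pr p (fun ω => E ω = e) *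
          pr p (fun ω => G ω = g ∧ S1 ω = s1 ∧ S2 ω = s2)) :
    let S1t : Ω → Bool := fun ω => if E ω then (G ω && S2 ω) else S1 ω
    (pr p (fun ω => S1t ω = false) = δ1) ∧
    (pr p (fun ω => S1t ω = false ∧ S2 ω = false) = δFF * δ2 + (1 - δFF) * δ12) ∧
    (pr p (fun ω => S1t ω = false ∧ S2 ω = false)
        = δFF * min δ1 δ2 + (1 - δFF) * δ12) ∧
    (pr p (fun ω => ¬(S1t ω = false ∧ S2 ω = false))
        = 1 - (δFF * min δ1 δ2 + (1 - δFF) * δ12)) :=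
  modified_channel_marginals_general p hsum S1 S2 G E δ1 δ2 δ12 δFF hδ21 hδ1lt hS1 hS2 hS12 hG
    hGS2indep hE hEindep
end

section
/- Consider random variables on a common probability space: messages W1, W2 with values in finite sets; a state process (S1[t], S2[t], F[t]) for t = 1,…,n, where S1[t], S2[t] are {0,1}-valued and F[t] takes values in a finite set, such that the n triples (S1[t],S2[t],F[t]) are i.i.d. across t and the entire state process is independent of (W1,W2). Suppose the channel inputs X[t] ∈ F₂ satisfy X[t] = f_t(W1, W2, (S1[s],S2[s],F[s])_{s<t}) for deterministic functions f_t, and define the outputs Y1[t] = S1[t]·X[t] and Y2[t] = S2[t]·X[t]. Let δ2 = P(S2[1]=0) < 1, p00 = P(S1[1]=0, S2[1]=0), and β2 = (1−p00)/(1−δ2). Then H[(Y1[t])_{t=1}^n | (W2, (S1[t],S2[t],F[t])_{t=1}^n)] ≤ β2 · H[(Y2[t])_{t=1}^n | (W2, (S1[t],S2[t],F[t])_{t=1}^n)]. -/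
/-!
Write `Z[t] = (Y1[t], Y2[t])`, which is erased only when both receivers are erased. By the chain
rule, `H[Z^n | W2, S^n]` is the sum over `t` of `H[Z[t] | Z^{t-1}, W2, S^n]`. The state at time `t`
and all later states are independent of the messages and the earlier states, hence of
`X[t], Z^{t-1}, W2, S^{t-1}`; so the `t`-th term equals
`(1 - p00) · H[X[t] | Z^{t-1}, W2, S^{t-1}]`. In the same way
`H[Y2^n | W2, S^n] = (1 - δ2) · Σ_t H[X[t] | Y2^{t-1}, W2, S^{t-1}]`. Since `Y2^{t-1}` is a
function of `Z^{t-1}`, conditioning reduces entropy term by term, which gives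
`(1 - δ2) · H[Z^n | W2, S^n] ≤ (1 - p00) · H[Y2^n | W2, S^n]`; finally, `Y1^n` is a function of
`Z^n`.
-/

open Finset
open scoped Classical

/-- Conditional Shannon entropy `H[X | Y] = Σ_y P(Y=y) · H[X | Y=y]`
(natural logarithm), for finite-valued random variables on a finite sample space. -/
noncomputable def condEnt {Ω : Type} [Fintype Ω] {α β : Type} [Fintype α] [Fintype β]
    (p : Ω → ℝ) (X : Ω → α) (Y : Ω → β) : ℝ :=
  ∑ y : β, pr p (fun ω => Y ω = y) *
    ∑ x : α, Real.negMulLog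
      (pr p (fun ω => X ω = x ∧ Y ω = y) / pr p (fun ω => Y ω = y))

open Real Function

namespace ErasureBroadcast

variable {Ω : Type} [Fintype Ω] {p : Ω → ℝ}

section Probability

lemma pr_nonneg (hp : ∀ ω, 0 ≤ p ω) (E : Ω → Prop) : 0 ≤ pr p E :=
  sum_nonneg fun ω _ => by split_ifs <;> simp [hp ω]

lemma pr_congr {E E' : Ω → Prop} (h : ∀ ω, E ω ↔ E' ω) : pr p E = pr p E' := by
  rw [show E = E' from funext fun ω => propext (h ω)]

lemma pr_mono (hp : ∀ ω, 0 ≤ p ω) {E E' : Ω → Prop} (h : ∀ ω, E ω → E' ω) :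
    pr p E ≤ pr p E' :=
  sum_le_sum fun ω _ => by
    by_cases hE : E ω
    · simp [hE, h ω hE]
    · split_ifs <;> simp [hp ω]

lemma pr_true (hsum : ∑ ω, p ω = 1) : pr p (fun _ => True) = 1 := by
  simpa [pr] using hsum

lemma pr_not (hsum : ∑ ω, p ω = 1) (E : Ω → Prop) : pr p (fun ω => ¬ E ω) = 1 - pr p E := by
  rw [← pr_true hsum, eq_sub_iff_add_eq, pr, pr, pr, ← sum_add_distrib]
  exact sum_congr rfl fun ω _ => by by_cases hE : E ω <;> simp [hE]

lemma pr_comp_and {β : Type} [Fintype β] (X : Ω → β) (E : β → Prop) (F : Ω → Prop) :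
    pr p (fun ω => E (X ω) ∧ F ω) = ∑ b ∈ univ.filter E, pr p (fun ω => X ω = b ∧ F ω) := by
  simp only [pr]
  rw [sum_comm]
  refine sum_congr rfl fun ω _ => ?_
  by_cases hF : F ω <;> simp [hF]

lemma pr_comp {β : Type} [Fintype β] (X : Ω → β) (E : β → Prop) :
    pr p (fun ω => E (X ω)) = ∑ b ∈ univ.filter E, pr p (fun ω => X ω = b) := by
  simpa using pr_comp_and (p := p) X E (fun _ => True)

lemma sum_pr_and {β : Type} [Fintype β] (X : Ω → β) (F : Ω → Prop) :
    ∑ b, pr p (fun ω => X ω = b ∧ F ω) = pr p F := by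
  simpa using (pr_comp_and (p := p) X (fun _ => True) F).symm

lemma sum_pr_eq_one (hsum : ∑ ω, p ω = 1) {β : Type} [Fintype β] (X : Ω → β) :
    ∑ b, pr p (fun ω => X ω = b) = 1 := by
  simpa [← pr_true hsum] using (pr_comp (p := p) X (fun _ => True)).symm

lemma sum_filter_pr_eq_one_sub (hsum : ∑ ω, p ω = 1) {β : Type} [Fintype β] (X : Ω → β)
    (E : β → Prop) :
    ∑ b ∈ univ.filter E, pr p (fun ω => X ω = b) = 1 - pr p (fun ω => ¬ E (X ω)) := by
  rw [pr_not hsum, pr_comp, sub_sub_cancel]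

end Probability

section Independence

variable {α δ : Type}

def PrIndep (p : Ω → ℝ) (A : Ω → α) (D : Ω → δ) : Prop :=
  ∀ a d, pr p (fun ω => A ω = a ∧ D ω = d) = pr p (fun ω => A ω = a) * pr p (fun ω => D ω = d)

lemma PrIndep.pr_comp_and [Fintype α] {A : Ω → α} {D : Ω → δ} (h : PrIndep p A D)
    (E : α → Prop) (d : δ) :
    pr p (fun ω => E (A ω) ∧ D ω = d) = pr p (fun ω => E (A ω)) * pr p (fun ω => D ω = d) := by
  rw [ErasureBroadcast.pr_comp_and, pr_comp, sum_mul]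
  exact sum_congr rfl fun a _ => h a d

lemma PrIndep.of_comp [Fintype α] {α' : Type} {A : Ω → α} {D : Ω → δ} (h : PrIndep p A D)
    {A' : Ω → α'} (g : α → α') (hA' : ∀ ω, A' ω = g (A ω)) : PrIndep p A' D := by
  intro a' d
  simp only [hA']
  exact h.pr_comp_and (fun a => g a = a') d

lemma PrIndep.of_pr_and_eq_mul [Fintype α] [Fintype δ] (hsum : ∑ ω, p ω = 1) {A : Ω → α} {D : Ω → δ}
    (f : α → ℝ) (g : δ → ℝ) (hg : ∑ d, g d = 1)
    (h : ∀ a d, pr p (fun ω => A ω = a ∧ D ω = d) = f a * g d) : PrIndep p A D := by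
  have hA : ∀ a, pr p (fun ω => A ω = a) = f a := fun a => by
    rw [← sum_pr_and D, ← mul_one (f a), ← hg, mul_sum]
    exact sum_congr rfl fun d _ => (pr_congr fun ω => and_comm).trans (h a d)
  have hD : ∀ d, pr p (fun ω => D ω = d) = g d := fun d => by
    rw [← sum_pr_and A, ← one_mul (g d), ← sum_pr_eq_one hsum A, sum_mul]
    exact sum_congr rfl fun a _ => by rw [h, hA]
  intro a d
  rw [h, hA, hD]

end Independence

section Entropy

variable {α β γ : Type} [Fintype α] [Fintype β] [Fintype γ]

noncomputable def ent (p : Ω → ℝ) (X : Ω → β) : ℝ :=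
  ∑ b, negMulLog (pr p fun ω => X ω = b)

lemma negMulLog_sum_le {ι : Type} (s : Finset ι) (f : ι → ℝ) (hf : ∀ i ∈ s, 0 ≤ f i) :
    negMulLog (∑ i ∈ s, f i) ≤ ∑ i ∈ s, negMulLog (f i) := by
  rw [negMulLog, neg_mul, ← mul_neg, sum_mul]
  refine sum_le_sum fun i hi => ?_
  rcases (hf i hi).eq_or_lt with h0 | h0
  · simp [← h0]
  · rw [negMulLog, neg_mul, ← mul_neg]
    exact mul_le_mul_of_nonneg_left
      (neg_le_neg (log_le_log h0 (single_le_sum hf hi))) h0.le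

lemma ent_comp_le (hp : ∀ ω, 0 ≤ p ω) (X : Ω → β) (g : β → γ) :
    ent p (fun ω => g (X ω)) ≤ ent p X := by
  unfold ent
  rw [← sum_fiberwise univ g fun b => negMulLog (pr p fun ω => X ω = b)]
  refine sum_le_sum fun c _ => ?_
  rw [pr_comp X fun b => g b = c]
  exact negMulLog_sum_le _ _ fun b _ => pr_nonneg hp _

lemma ent_congr (hp : ∀ ω, 0 ≤ p ω) {X : Ω → β} {X' : Ω → γ} (g : β → γ) (h : γ → β)
    (hg : ∀ ω, X' ω = g (X ω)) (hh : ∀ ω, X ω = h (X' ω)) : ent p X = ent p X' := by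
  have h₁ := ent_comp_le hp X g
  have h₂ := ent_comp_le hp X' h
  simp only [← hg, ← hh] at h₁ h₂
  exact le_antisymm h₂ h₁

lemma mul_negMulLog_div {a c : ℝ} (ha : 0 ≤ a) (hac : a ≤ c) :
    c * negMulLog (a / c) = negMulLog a + a * log c := by
  rcases ha.eq_or_lt with rfl | ha
  · simp
  have hc : c ≠ 0 := (ha.trans_le hac).ne'
  simp only [negMulLog, log_div ha.ne' hc]
  field_simp
  ring

lemma condEnt_eq_sub (hp : ∀ ω, 0 ≤ p ω) (X : Ω → α) (Y : Ω → β) :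
    condEnt p X Y = ent p (fun ω => (X ω, Y ω)) - ent p Y := by
  have hY : ∀ y, pr p (fun ω => Y ω = y) * ∑ x, negMulLog
      (pr p (fun ω => X ω = x ∧ Y ω = y) / pr p (fun ω => Y ω = y))
      = ∑ x, negMulLog (pr p fun ω => X ω = x ∧ Y ω = y)
        - negMulLog (pr p fun ω => Y ω = y) := fun y => by
    rw [mul_sum, sum_congr rfl fun x _ => mul_negMulLog_div (pr_nonneg hp _)
      (pr_mono hp fun ω h => h.2), sum_add_distrib, ← sum_mul, sum_pr_and, negMulLog]
    ring
  rw [condEnt, sum_congr rfl fun y _ => hY y, sum_sub_distrib, sum_comm, ent, ent,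
    Fintype.sum_prod_type]
  simp only [Prod.mk.injEq]

lemma condEnt_comp_le (hp : ∀ ω, 0 ≤ p ω) (X : Ω → α) (Y : Ω → β) (g : α → γ) :
    condEnt p (fun ω => g (X ω)) Y ≤ condEnt p X Y := by
  rw [condEnt_eq_sub hp, condEnt_eq_sub hp]
  exact sub_le_sub_right (ent_comp_le hp (fun ω => (X ω, Y ω)) (Prod.map g id)) _

lemma condEnt_congr_left (hp : ∀ ω, 0 ≤ p ω) {X : Ω → α} {X' : Ω → γ} (Y : Ω → β)
    (g : α → γ) (h : γ → α) (hg : ∀ ω, X' ω = g (X ω)) (hh : ∀ ω, X ω = h (X' ω)) :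
    condEnt p X Y = condEnt p X' Y := by
  rw [condEnt_eq_sub hp, condEnt_eq_sub hp, ent_congr (X' := fun ω => (X' ω, Y ω)) hp
    (Prod.map g id) (Prod.map h id) (fun ω => by simp [hg]) (fun ω => by simp [hh])]

lemma condEnt_congr_right (hp : ∀ ω, 0 ≤ p ω) (X : Ω → α) {Y : Ω → β} {Y' : Ω → γ}
    (g : β → γ) (h : γ → β) (hg : ∀ ω, Y' ω = g (Y ω)) (hh : ∀ ω, Y ω = h (Y' ω)) :
    condEnt p X Y = condEnt p X Y' := by
  rw [condEnt_eq_sub hp, condEnt_eq_sub hp, ent_congr hp g h hg hh, ent_congr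
    (X' := fun ω => (X ω, Y' ω)) hp (Prod.map id g) (Prod.map id h) (fun ω => by simp [hg])
    (fun ω => by simp [hh])]

lemma condEnt_comp_of_injective (hp : ∀ ω, 0 ≤ p ω) (X : Ω → α) (Y : Ω → β) {g : α → γ}
    (hg : Injective g) : condEnt p (fun ω => g (X ω)) Y = condEnt p X Y := by
  rcases isEmpty_or_nonempty α with hα | hα
  · have := X.isEmpty
    simp [condEnt, pr]
  · exact (condEnt_congr_left hp Y g (invFun g) (fun _ => rfl)
      fun ω => (leftInverse_invFun hg (X ω)).symm).symm

lemma condEnt_comp_of_const (hp : ∀ ω, 0 ≤ p ω) {ε : Type} (X : Ω → ε) (Y : Ω → β) {g : ε → γ}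
    (hg : ∀ a a', g a = g a') : condEnt p (fun ω => g (X ω)) Y = 0 := by
  rcases isEmpty_or_nonempty ε with hε | ⟨⟨a⟩⟩
  · have := X.isEmpty
    simp [condEnt, pr]
  · rw [condEnt_eq_sub hp, ent_congr (X' := Y) hp Prod.snd (fun y => (g a, y)) (fun _ => rfl)
      (fun ω => by rw [hg]), sub_self]

lemma condEnt_pair (hp : ∀ ω, 0 ≤ p ω) (X : Ω → α) (Z : Ω → γ) (Y : Ω → β) :
    condEnt p (fun ω => (X ω, Z ω)) Y = condEnt p Z Y + condEnt p X (fun ω => (Z ω, Y ω)) := by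
  rw [condEnt_eq_sub hp, condEnt_eq_sub hp, condEnt_eq_sub hp,
    ent_congr hp (fun x => (x.1.1, x.1.2, x.2)) (fun x => ((x.1, x.2.1), x.2.2))
      (fun _ => rfl) (fun _ => rfl)]
  ring

lemma sum_mul_negMulLog_div_le {ι : Type} (s : Finset ι) (a c : ι → ℝ)
    (ha : ∀ i ∈ s, 0 ≤ a i) (hac : ∀ i ∈ s, a i ≤ c i) :
    ∑ i ∈ s, c i * negMulLog (a i / c i)
      ≤ (∑ i ∈ s, c i) * negMulLog ((∑ i ∈ s, a i) / ∑ i ∈ s, c i) := by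
  have hc : ∀ i ∈ s, 0 ≤ c i := fun i hi => (ha i hi).trans (hac i hi)
  rcases (sum_nonneg hc).eq_or_lt with hC | hC
  · have hc0 := (sum_eq_zero_iff_of_nonneg hc).mp hC.symm
    rw [← hC, sum_congr rfl fun i hi => by rw [hc0 i hi, zero_mul]]
    simp
  have hpt : ∀ i ∈ s, (c i / ∑ j ∈ s, c j) * (a i / c i) = a i / ∑ j ∈ s, c j := fun i hi => by
    rcases (hc i hi).eq_or_lt with h0 | h0
    · simp [← h0, le_antisymm (h0 ▸ hac i hi) (ha i hi)]
    · field_simp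
  have hJ := concaveOn_negMulLog.le_map_sum (t := s) (w := fun i => c i / ∑ j ∈ s, c j)
    (p := fun i => a i / c i) (fun i hi => div_nonneg (hc i hi) hC.le)
    (by rw [← sum_div, div_self hC.ne']) (fun i hi => div_nonneg (ha i hi) (hc i hi))
  simp only [smul_eq_mul] at hJ
  rw [sum_congr rfl hpt, ← sum_div] at hJ
  simp only [div_mul_eq_mul_div, ← sum_div] at hJ
  rw [div_le_iff₀ hC] at hJ
  linarith

lemma condEnt_le_condEnt_comp (hp : ∀ ω, 0 ≤ p ω) (X : Ω → α) (Y : Ω → β) (g : β → γ) :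
    condEnt p X Y ≤ condEnt p X (fun ω => g (Y ω)) := by
  unfold condEnt
  rw [← sum_fiberwise univ g]
  refine sum_le_sum fun c _ => ?_
  have hjoint : ∀ x, pr p (fun ω => X ω = x ∧ g (Y ω) = c)
      = ∑ y ∈ univ.filter (g · = c), pr p (fun ω => X ω = x ∧ Y ω = y) := fun x => by
    rw [pr_congr fun ω => and_comm, pr_comp_and Y (g · = c) (fun ω => X ω = x)]
    exact sum_congr rfl fun y _ => pr_congr fun ω => and_comm
  simp only [mul_sum, hjoint, pr_comp Y (g · = c)]
  rw [sum_comm]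
  exact sum_le_sum fun x _ => sum_mul_negMulLog_div_le _ _ _ (fun y _ => pr_nonneg hp _)
    fun y _ => pr_mono hp fun ω h => h.2

end Entropy

section Erasure

structure IsErasure {δ α ρ : Type} (φ : δ → α → ρ) (G : δ → Prop) : Prop where
  injective : ∀ d, G d → Injective (φ d)
  const : ∀ d, ¬ G d → ∀ a a', φ d a = φ d a'

variable {α β δ ρ : Type} [Fintype α] [Fintype β] [Fintype δ] [Fintype ρ]

lemma condEnt_comp_pair_of_prIndep {A : Ω → α} {B : Ω → β} {D : Ω → δ}
    (hind : PrIndep p (fun ω => (A ω, B ω)) D) (f : δ → α → ρ) :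
    condEnt p (fun ω => f (D ω) (A ω)) (fun ω => (B ω, D ω))
      = ∑ d, pr p (fun ω => D ω = d) * condEnt p (fun ω => f d (A ω)) B := by
  have hBD : ∀ b d, pr p (fun ω => (B ω, D ω) = (b, d))
      = pr p (fun ω => B ω = b) * pr p (fun ω => D ω = d) := fun b d =>
    (pr_congr fun ω => Prod.ext_iff).trans (hind.pr_comp_and (fun ab => ab.2 = b) d)
  have hjoint : ∀ r b d, pr p (fun ω => f (D ω) (A ω) = r ∧ (B ω, D ω) = (b, d))
      = pr p (fun ω => f d (A ω) = r ∧ B ω = b) * pr p (fun ω => D ω = d) := fun r b d => by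
    rw [← hind.pr_comp_and (fun ab => f d ab.1 = r ∧ ab.2 = b) d]
    refine pr_congr fun ω => ?_
    simp only [Prod.mk.injEq]
    constructor
    · rintro ⟨h, rfl, rfl⟩
      exact ⟨⟨h, rfl⟩, rfl⟩
    · rintro ⟨⟨h, rfl⟩, rfl⟩
      exact ⟨h, rfl, rfl⟩
  unfold condEnt
  rw [Fintype.sum_prod_type, sum_comm]
  refine sum_congr rfl fun d _ => ?_
  rw [mul_sum]
  refine sum_congr rfl fun b _ => ?_
  simp only [hBD, hjoint]
  rcases eq_or_ne (pr p fun ω => D ω = d) 0 with h0 | h0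
  · simp [h0]
  · simp only [mul_div_mul_right _ _ h0]
    ring

theorem condEnt_erasure_of_prIndep (hp : ∀ ω, 0 ≤ p ω) {A : Ω → α} {B : Ω → β} {D : Ω → δ}
    (hind : PrIndep p (fun ω => (A ω, B ω)) D) {φ : δ → α → ρ} {G : δ → Prop}
    (hφ : IsErasure φ G) :
    condEnt p (fun ω => φ (D ω) (A ω)) (fun ω => (B ω, D ω))
      = pr p (fun ω => G (D ω)) * condEnt p A B := by
  rw [condEnt_comp_pair_of_prIndep hind, pr_comp, sum_mul, sum_filter]
  refine sum_congr rfl fun d _ => ?_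
  split_ifs with hd
  · rw [condEnt_comp_of_injective hp A B (hφ.injective d hd)]
  · rw [condEnt_comp_of_const hp A B (hφ.const d hd), mul_zero]

end Erasure

section Product

variable {υ σ ι : Type} [Fintype υ] [Fintype σ] [Fintype ι] {q : σ → ℝ}

def IsIIDIndep (p : Ω → ℝ) (q : σ → ℝ) (U : Ω → υ) (V : Ω → ι → σ) : Prop :=
  ∀ u v, pr p (fun ω => U ω = u ∧ V ω = v) = pr p (fun ω => U ω = u) * ∏ i, q (v i)

lemma sum_prod_eq_one (hq : ∑ x, q x = 1) : ∑ v : ι → σ, ∏ i, q (v i) = 1 := by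
  rw [← Fintype.prod_sum]
  simp [hq]

lemma IsIIDIndep.prIndep_restrict (hsum : ∑ ω, p ω = 1) (hq : ∑ x, q x = 1)
    {U : Ω → υ} {V : Ω → ι → σ} (hUV : IsIIDIndep p q U V) (P : ι → Prop) :
    PrIndep p (fun ω => (U ω, fun i : {i // P i} => V ω i))
      (fun ω => fun i : {i // ¬ P i} => V ω i) := by
  refine PrIndep.of_pr_and_eq_mul hsum (fun ua => pr p (fun ω => U ω = ua.1) * ∏ i, q (ua.2 i))
    (fun b => ∏ i, q (b i)) (by convert sum_prod_eq_one hq) fun ⟨u, a⟩ b => ?_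
  let e := Equiv.piEquivPiSubtypeProd P fun _ => σ
  have hev : ∀ ω, ((U ω, fun i : {i // P i} => V ω i) = (u, a) ∧
      (fun i : {i // ¬ P i} => V ω i) = b) ↔ (U ω = u ∧ V ω = e.symm (a, b)) := fun ω => by
    rw [Equiv.eq_symm_apply, Prod.mk.injEq, and_assoc]
    exact and_congr_right' (Prod.ext_iff (x := e (V ω)) (y := (a, b))).symm
  rw [pr_congr hev, hUV, ← Fintype.prod_subtype_mul_prod_subtype P, mul_assoc]
  congr 2 <;> exact prod_congr rfl fun i _ => by simp [e, i.2]

lemma IsIIDIndep.pr_apply (hsum : ∑ ω, p ω = 1) (hq : ∑ x, q x = 1) {U : Ω → υ}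
    {V : Ω → ι → σ} (hUV : IsIIDIndep p q U V) (i : ι) (G : σ → Prop) :
    pr p (fun ω => G (V ω i)) = ∑ x ∈ univ.filter G, q x := by
  have hV : ∀ v, pr p (fun ω => V ω = v) = ∏ i, q (v i) := fun v => by
    rw [← sum_pr_and U, sum_congr rfl fun u _ => hUV u v, ← sum_mul, sum_pr_eq_one hsum, one_mul]
  let F : ι → σ → ℝ := fun j x => if j = i then (if G x then q x else 0) else q x
  have hF : ∀ v : ι → σ, ∏ j, F j (v j) = if G (v i) then ∏ j, q (v j) else 0 := fun v => by
    split_ifs with hG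
    · exact prod_congr rfl fun j _ => by by_cases hj : j = i <;> simp [F, hj, hG]
    · exact prod_eq_zero (mem_univ i) (by simp [F, hG])
  have hsumF : ∏ j, ∑ x, F j x = ∑ x ∈ univ.filter G, q x := by
    have hj : ∀ j, ∑ x, F j x = if j = i then ∑ x ∈ univ.filter G, q x else 1 := fun j => by
      by_cases hj : j = i <;> simp [F, hj, hq, sum_filter]
    simp [hj]
  rw [pr_comp V fun v => G (v i), ← hsumF, Fintype.prod_sum, sum_filter]
  exact sum_congr rfl fun v _ => by rw [hF, hV]

end Product

section ChannelOutputs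

variable {n : ℕ} {β γ : Type}

/-- The prefix `y[<k]` as a vector of fixed type: the later entries are replaced by `none`. -/
def truncAt (k : ℕ) (y : Fin n → β) : Fin n → Option β :=
  fun s => if (s : ℕ) < k then some (y s) else none

lemma truncAt_injective : Injective (truncAt n : (Fin n → β) → Fin n → Option β) := fun y y' h =>
  funext fun s => by simpa [truncAt] using congrFun h s

variable [Fintype β] [Fintype γ]

lemma condEnt_truncAt_succ (hp : ∀ ω, 0 ≤ p ω) (Y : Ω → Fin n → β) (C : Ω → γ) {k : ℕ}
    (hk : k < n) :
    condEnt p (fun ω => truncAt (k + 1) (Y ω)) C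
      = condEnt p (fun ω => truncAt k (Y ω)) C
        + condEnt p (fun ω => Y ω ⟨k, hk⟩) (fun ω => (truncAt k (Y ω), C ω)) := by
  have hpair := condEnt_pair hp (fun ω => some (Y ω ⟨k, hk⟩)) (fun ω => truncAt k (Y ω)) C
  rw [condEnt_comp_of_injective hp _ _ (Option.some_injective β)] at hpair
  rw [← hpair]
  refine condEnt_congr_left hp C
    (fun z => (z ⟨k, hk⟩, fun s => if (s : ℕ) < k then z s else none))
    (fun xz s => if (s : ℕ) = k then xz.1 else xz.2 s) (fun ω => ?_) (fun ω => ?_)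
  · refine Prod.ext (by simp [truncAt]) (funext fun s => ?_)
    simp only [truncAt]
    split_ifs <;> first | rfl | (exfalso; omega)
  · funext s
    by_cases hs : (s : ℕ) = k
    · obtain rfl : s = ⟨k, hk⟩ := Fin.ext hs
      simp [truncAt]
    · simp only [truncAt, hs, if_false]
      split_ifs <;> first | rfl | (exfalso; omega)

theorem condEnt_eq_sum_condEnt_truncAt (hp : ∀ ω, 0 ≤ p ω) (Y : Ω → Fin n → β) (C : Ω → γ) :
    condEnt p Y C
      = ∑ t : Fin n, condEnt p (fun ω => Y ω t) (fun ω => (truncAt t (Y ω), C ω)) := by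
  have hprefix : ∀ k ≤ n, condEnt p (fun ω => truncAt k (Y ω)) C
      = ∑ t ∈ univ.filter (fun t : Fin n => (t : ℕ) < k),
          condEnt p (fun ω => Y ω t) (fun ω => (truncAt t (Y ω), C ω)) := by
    intro k hk
    induction k with
    | zero =>
      simpa using condEnt_comp_of_const hp Y C (g := truncAt 0)
        fun y y' => funext fun s => by simp [truncAt]
    | succ k ih =>
      have hfilter : univ.filter (fun t : Fin n => (t : ℕ) < k + 1)
          = insert ⟨k, hk⟩ (univ.filter fun t : Fin n => (t : ℕ) < k) := by
        ext t
        simp [Fin.ext_iff]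
        omega
      rw [condEnt_truncAt_succ hp Y C hk, ih (by omega), hfilter, sum_insert (by simp), add_comm]
  rw [← condEnt_comp_of_injective hp Y C truncAt_injective, hprefix n le_rfl]
  exact sum_congr (filter_true_of_mem fun t _ => t.isLt) fun _ _ => rfl

variable {υ σ ξ μ : Type} [Fintype υ] [Fintype σ] [Fintype ξ] [Fintype μ]
  {q : σ → ℝ} {U : Ω → υ} {V : Ω → Fin n → σ} {X : Fin n → Ω → ξ}

def IsCausal (U : Ω → υ) (V : Ω → Fin n → σ) (X : Fin n → Ω → ξ) : Prop :=
  ∀ t, ∃ f : υ → ({s // s < t} → σ) → ξ, ∀ ω, X t ω = f (U ω) fun s => V ω s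

theorem condEnt_erasure_letter (hp : ∀ ω, 0 ≤ p ω) (hsum : ∑ ω, p ω = 1) (hq : ∑ x, q x = 1)
    (hUV : IsIIDIndep p q U V) (hX : IsCausal U V X) {φ : σ → ξ → β} {G : σ → Prop}
    (hφ : IsErasure φ G) (m : υ → μ) (t : Fin n) :
    condEnt p (fun ω => φ (V ω t) (X t ω))
        (fun ω => (truncAt t fun s => φ (V ω s) (X s ω), m (U ω), V ω))
      = pr p (fun ω => G (V ω t)) * condEnt p (X t) (fun ω =>
          (truncAt t fun s => φ (V ω s) (X s ω), m (U ω), fun s : {s // s < t} => V ω s)) := by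
  choose f hf using hX
  let e := Equiv.piEquivPiSubtypeProd (· < t) fun _ => σ
  let outputsBefore : υ × ({s // s < t} → σ) → Fin n → Option β := fun ua s =>
    if h : s < t then some (φ (ua.2 ⟨s, h⟩) (f s ua.1 fun r => ua.2 ⟨r, r.2.trans h⟩)) else none
  have houtputs : ∀ ω, (truncAt t fun s => φ (V ω s) (X s ω))
      = outputsBefore (U ω, fun s => V ω s) := fun ω => funext fun s => by
    by_cases h : s < t
    · simp [truncAt, outputsBefore, h, show (s : ℕ) < t from h, hf]
    · simp [truncAt, outputsBefore, h, show ¬ (s : ℕ) < t from h]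
  have hind := (hUV.prIndep_restrict hsum hq (· < t)).of_comp
    (fun ua => (f t ua.1 ua.2, outputsBefore ua, m ua.1, ua.2))
    (A' := fun ω => (X t ω, (truncAt t fun s => φ (V ω s) (X s ω), m (U ω),
      fun s : {s // s < t} => V ω s))) fun ω => by rw [hf, houtputs]
  rw [condEnt_congr_right hp _ (fun zwv => ((zwv.1, zwv.2.1, (e zwv.2.2).1), (e zwv.2.2).2))
    (fun zwab => (zwab.1.1, zwab.1.2.1, e.symm (zwab.1.2.2, zwab.2))) (fun _ => rfl)
    fun ω => by simp]
  exact condEnt_erasure_of_prIndep hp hind (φ := fun r => φ (r ⟨t, lt_irrefl t⟩))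
    (G := fun r => G (r ⟨t, lt_irrefl t⟩)) ⟨fun _ => hφ.injective _, fun _ => hφ.const _⟩

theorem condEnt_erasure_output (hp : ∀ ω, 0 ≤ p ω) (hsum : ∑ ω, p ω = 1) (hq : ∑ x, q x = 1)
    (hUV : IsIIDIndep p q U V) (hX : IsCausal U V X) {φ : σ → ξ → β} {G : σ → Prop}
    (hφ : IsErasure φ G) (m : υ → μ) :
    condEnt p (fun ω t => φ (V ω t) (X t ω)) (fun ω => (m (U ω), V ω))
      = (∑ x ∈ univ.filter G, q x) * ∑ t, condEnt p (X t) (fun ω =>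
          (truncAt t fun s => φ (V ω s) (X s ω), m (U ω), fun s : {s // s < t} => V ω s)) := by
  rw [condEnt_eq_sum_condEnt_truncAt hp, mul_sum]
  refine sum_congr rfl fun t _ => ?_
  rw [condEnt_erasure_letter hp hsum hq hUV hX hφ m t, hUV.pr_apply hsum hq]

theorem mul_condEnt_erasure_output_le {β' : Type} [Fintype β'] (hp : ∀ ω, 0 ≤ p ω)
    (hsum : ∑ ω, p ω = 1) (hq0 : ∀ x, 0 ≤ q x) (hq : ∑ x, q x = 1) (hUV : IsIIDIndep p q U V)
    (hX : IsCausal U V X) {φ : σ → ξ → β} {G : σ → Prop} (hφ : IsErasure φ G)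
    {φ' : σ → ξ → β'} {G' : σ → Prop} (hφ' : IsErasure φ' G') (ψ : β → β')
    (hψ : ∀ x a, φ' x a = ψ (φ x a)) (m : υ → μ) :
    (∑ x ∈ univ.filter G', q x) *
        condEnt p (fun ω t => φ (V ω t) (X t ω)) (fun ω => (m (U ω), V ω))
      ≤ (∑ x ∈ univ.filter G, q x) *
        condEnt p (fun ω t => φ' (V ω t) (X t ω)) (fun ω => (m (U ω), V ω)) := by
  rw [condEnt_erasure_output hp hsum hq hUV hX hφ m, condEnt_erasure_output hp hsum hq hUV hX hφ' m,
    mul_left_comm]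
  refine mul_le_mul_of_nonneg_left (mul_le_mul_of_nonneg_left (sum_le_sum fun t _ => ?_)
    (sum_nonneg fun x _ => hq0 x)) (sum_nonneg fun x _ => hq0 x)
  have hcond : (fun ω => (truncAt t fun s => φ' (V ω s) (X s ω), m (U ω),
      fun s : {s // s < t} => V ω s)) = fun ω =>
      (fun s => Option.map ψ ((truncAt t fun s => φ (V ω s) (X s ω)) s), m (U ω),
        fun s : {s // s < t} => V ω s) :=
    funext fun ω => Prod.ext (funext fun s => by
      by_cases h : (s : ℕ) < t <;> simp [truncAt, h, hψ]) rfl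
  rw [hcond]
  exact condEnt_le_condEnt_comp hp (X t) _
    fun zwa : (Fin n → Option β) × μ × ({s // s < t} → σ) =>
      (fun s => Option.map ψ (zwa.1 s), zwa.2)

end ChannelOutputs

end ErasureBroadcast

open ErasureBroadcast

/-- Claim 2 of the paper (the n-letter extremal entropy inequality):
for messages `W1, W2`, an i.i.d. state process `(S1[t],S2[t],F[t])` independent of the
messages, channel inputs `X[t]` that are deterministic functions of the messages and
strictly past states, and outputs `Yi[t] = Si[t]·X[t]`, one has
`H[Y1^n | (W2, S^n, F^n)] ≤ β2 · H[Y2^n | (W2, S^n, F^n)]`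
where `β2 = (1 − P(S1=0,S2=0)) / (1 − P(S2=0))`. -/
theorem n_letter_extremal_entropy_inequality
    {Ω α1 α2 γ : Type} [Fintype Ω] [Fintype α1] [Fintype α2] [Fintype γ]
    (p : Ω → ℝ) (hp : ∀ ω, 0 ≤ p ω) (hsum : ∑ ω, p ω = 1)
    (n : ℕ) (hn : 0 < n)
    (W1 : Ω → α1) (W2 : Ω → α2)
    (S1 S2 : Ω → Fin n → Bool) (F : Ω → Fin n → γ)
    (X : Fin n → Ω → ZMod 2)
    -- the state triples are i.i.d. across time
    (hiid : ∀ v : Fin n → Bool × Bool × γ,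
      pr p (fun ω => ∀ t, (S1 ω t, S2 ω t, F ω t) = v t)
        = ∏ t, pr p (fun ω => (S1 ω ⟨0, hn⟩, S2 ω ⟨0, hn⟩, F ω ⟨0, hn⟩) = v t))
    -- the entire state process is independent of the messages (W1, W2)
    (hindep : ∀ (v : Fin n → Bool × Bool × γ) (w1 : α1) (w2 : α2),
      pr p (fun ω => (∀ t, (S1 ω t, S2 ω t, F ω t) = v t) ∧ W1 ω = w1 ∧ W2 ω = w2)
        = pr p (fun ω => ∀ t, (S1 ω t, S2 ω t, F ω t) = v t) *
          pr p (fun ω => W1 ω = w1 ∧ W2 ω = w2))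
    -- X[t] is a deterministic function of the messages and strictly past states
    (henc : ∀ t : Fin n,
      ∃ f : α1 → α2 → ({s : Fin n // s < t} → Bool × Bool × γ) → ZMod 2,
      ∀ ω, X t ω = f (W1 ω) (W2 ω) (fun s => (S1 ω s.1, S2 ω s.1, F ω s.1)))
    (δ2 p00 : ℝ)
    (hδ2 : pr p (fun ω => S2 ω ⟨0, hn⟩ = false) = δ2) (hδ2lt : δ2 < 1)
    (hp00 : pr p (fun ω => S1 ω ⟨0, hn⟩ = false ∧ S2 ω ⟨0, hn⟩ = false) = p00) :
    condEnt p (fun ω => fun t : Fin n => (if S1 ω t then X t ω else 0 : ZMod 2))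
        (fun ω => (W2 ω, fun t : Fin n => (S1 ω t, S2 ω t, F ω t)))
      ≤ ((1 - p00) / (1 - δ2)) *
        condEnt p (fun ω => fun t : Fin n => (if S2 ω t then X t ω else 0 : ZMod 2))
          (fun ω => (W2 ω, fun t : Fin n => (S1 ω t, S2 ω t, F ω t))) := by
  have hUV : IsIIDIndep p (fun x => pr p fun ω => (S1 ω ⟨0, hn⟩, S2 ω ⟨0, hn⟩, F ω ⟨0, hn⟩) = x)
      (fun ω => (W1 ω, W2 ω)) (fun ω t => (S1 ω t, S2 ω t, F ω t)) := fun u v => by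
    rw [← hiid v, mul_comm, pr_congr (E := fun ω => (W1 ω, W2 ω) = u) fun ω => Prod.ext_iff,
      ← hindep v u.1 u.2]
    exact pr_congr fun ω => by rw [funext_iff, Prod.ext_iff, and_comm]
  have hX : IsCausal (fun ω => (W1 ω, W2 ω)) (fun ω t => (S1 ω t, S2 ω t, F ω t)) X := fun t =>
    let ⟨f, hf⟩ := henc t
    ⟨fun u => f u.1 u.2, hf⟩
  have hmain := mul_condEnt_erasure_output_le hp hsum (fun _ => pr_nonneg hp _)
    (sum_pr_eq_one hsum _) hUV hX
    (φ := fun x a => ((if x.1 then a else 0 : ZMod 2), (if x.2.1 then a else 0 : ZMod 2)))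
    (G := fun x => x.1 = true ∨ x.2.1 = true)
    ⟨fun x hx a a' h => by rcases hx with hx | hx <;> simp_all [Prod.ext_iff],
      fun x hx a a' => by simp_all⟩
    (φ' := fun x a => (if x.2.1 then a else 0 : ZMod 2)) (G' := fun x => x.2.1 = true)
    ⟨fun x hx a a' h => by simp_all, fun x hx a a' => by simp_all⟩
    Prod.snd (fun _ _ => rfl) Prod.snd
  simp only [sum_filter_pr_eq_one_sub hsum, Bool.not_eq_true, not_or, hδ2, hp00] at hmain
  have hY1 := condEnt_comp_le hp
    (fun ω t => ((if S1 ω t then X t ω else 0 : ZMod 2), (if S2 ω t then X t ω else 0 : ZMod 2)))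
    (fun ω => (W2 ω, fun t => (S1 ω t, S2 ω t, F ω t))) fun z t => (z t).1
  have hδ : 0 < 1 - δ2 := sub_pos.mpr hδ2lt
  rw [div_mul_eq_mul_div, le_div_iff₀ hδ]
  linarith [mul_le_mul_of_nonneg_right hY1 hδ.le]
end
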